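/- Let e be a transitive relation on a set E. (i) A subset x ⊆ e is regular closed if and only if x = cl(u) for some open subset u of e. (ii) For every family (aᵢ) of regular closed subsets of e, the set cl(⋃ᵢ aᵢ) is the least regular closed subset of e containing every aᵢ, and cl(int(⋂ᵢ aᵢ)) is the greatest regular closed subset of e contained in every aᵢ; hence Reg(e), ordered by inclusion, is a complete lattice. -/

import Mathlib

/-- A binary relation (as a set of pairs) is transitive. -/
def TransRel {E : Type*} (a : Set (E × E)) : Prop :=
  ∀ x y z : E, (x, y) ∈ a → (y, z) ∈ a → (x, z) ∈ a

/-- The transitive closure of a set of pairs. -/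
def tcl {E : Type*} (a : Set (E × E)) : Set (E × E) :=
  {p | Relation.TransGen (fun u v => (u, v) ∈ a) p.1 p.2}

/-- The interior of `a` relative to `e`. -/
def tint {E : Type*} (e a : Set (E × E)) : Set (E × E) :=
  e \ tcl (e \ a)

/-- `a` is a closed subset of `e`. -/
def IsClosedIn {E : Type*} (e a : Set (E × E)) : Prop :=
  a ⊆ e ∧ TransRel a

/-- `a` is an open subset of `e`. -/
def IsOpenIn {E : Type*} (e a : Set (E × E)) : Prop :=
  a ⊆ e ∧ TransRel (e \ a)

/-- `a` is a clopen subset of `e`. -/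
def IsClopenIn {E : Type*} (e a : Set (E × E)) : Prop :=
  a ⊆ e ∧ TransRel a ∧ TransRel (e \ a)

/-- `a` is a regular closed subset of `e`. -/
def RegClosed {E : Type*} (e a : Set (E × E)) : Prop :=
  a ⊆ e ∧ a = tcl (tint e a)

/-- The reflexive preordering `x ⊴ y` associated with `e`. -/
def rle {E : Type*} (e : Set (E × E)) (x y : E) : Prop :=
  (x, y) ∈ e ∨ x = y

/-- `x ≡ y`: `x ⊴ y` and `y ⊴ x`. -/
def eqv {E : Type*} (e : Set (E × E)) (x y : E) : Prop :=
  rle e x y ∧ rle e y x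

/-- `e` is square-free. -/
def SqFree {E : Type*} (e : Set (E × E)) : Prop :=
  ∀ a b x y : E, (a, b) ∈ e → rle e a x → rle e x b → rle e a y → rle e y b →
    rle e x y ∨ rle e y x

/-- The interval `[a,b] = {x | a ⊴ x ⊴ b}`. -/
def cce {E : Type*} (e : Set (E × E)) (a b : E) : Set E :=
  {x | rle e a x ∧ rle e x b}

/-- `(a,b,U) ∈ F(e)`. -/
def Ftriple {E : Type*} (e : Set (E × E)) (a b : E) (U : Set E) : Prop :=
  (a, b) ∈ e ∧ U ⊆ cce e a b ∧ (a ≠ b → a ∉ U ∧ b ∈ U)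

/-- The clopen set `⟨a,b,U⟩ = e ∩ (({a} ∪ Uᶜ) × ({b} ∪ U))`. -/
def pji {E : Type*} (e : Set (E × E)) (a b : E) (U : Set E) : Set (E × E) :=
  e ∩ ((({a} : Set E) ∪ (cce e a b \ U)) ×ˢ (({b} : Set E) ∪ U))

/-- The set `p₋` associated with `p = ⟨a,b,U⟩`: if `a ≠ b` it is
`p \ ([a] × [b])`, and if `a = b` it is `p \ {(a,a)}`. -/
def pminus {E : Type*} (e : Set (E × E)) (a b : E) (U : Set E) : Set (E × E) :=
  {z ∈ pji e a b U | ¬ ((a ≠ b ∧ eqv e z.1 a ∧ eqv e z.2 b) ∨ (a = b ∧ z = (a, a)))}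

/-! With `tcl` as closure and `tint e` as interior, regular closed sets behave as in a
topological space. For open `u`, `cl(e \ cl u) ⊆ e \ u` because `e \ u` is transitive, so
`u ⊆ int(cl u)` and `cl u = cl(int(cl u))` is regular closed. For regular closed `aᵢ = cl(int aᵢ)`,
`cl(⋃ aᵢ) = cl(⋃ int aᵢ)` is then regular closed, since the complement in `e` of a union of open
sets is an intersection of transitive relations; and `cl(int(⋂ aᵢ))` is regular closed and, by
monotonicity of `cl ∘ int`, lies above every regular closed `b ⊆ ⋂ aᵢ` and below each `aᵢ`. -/

section RegClosed

variable {E : Type*} {e a b u : Set (E × E)}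

lemma subset_tcl (a : Set (E × E)) : a ⊆ tcl a := fun _ hp =>
  Relation.TransGen.single hp

lemma transRel_tcl (a : Set (E × E)) : TransRel (tcl a) := fun _ _ _ hxy hyz =>
  hxy.trans hyz

lemma tcl_subset_of_transRel (hb : TransRel b) (h : a ⊆ b) : tcl a ⊆ b := by
  have : IsTrans E (fun u v => (u, v) ∈ b) := ⟨hb⟩
  exact fun _ hp =>
    Relation.transGen_minimal (r' := fun u v => (u, v) ∈ b) (fun _ _ h' => h h') _ _ hp

lemma tcl_mono (h : a ⊆ b) : tcl a ⊆ tcl b := fun _ hp =>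
  Relation.TransGen.mono (fun _ _ h' => h h') _ _ hp

lemma tcl_tcl (a : Set (E × E)) : tcl (tcl a) = tcl a :=
  (tcl_subset_of_transRel (transRel_tcl a) subset_rfl).antisymm (subset_tcl _)

lemma tcl_iUnion_tcl {ι : Sort*} (a : ι → Set (E × E)) :
    tcl (⋃ i, tcl (a i)) = tcl (⋃ i, a i) := by
  refine (tcl_subset_of_transRel (transRel_tcl _) ?_).antisymm
    (tcl_mono (Set.iUnion_mono fun i => subset_tcl (a i)))
  exact Set.iUnion_subset fun i => tcl_mono (Set.subset_iUnion a i)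

lemma tint_subset (e a : Set (E × E)) : tint e a ⊆ a := fun _ hp => by
  by_contra h
  exact hp.2 (subset_tcl _ ⟨hp.1, h⟩)

lemma tint_mono (e : Set (E × E)) (h : a ⊆ b) : tint e a ⊆ tint e b :=
  Set.sdiff_subset_sdiff_right (tcl_mono (Set.sdiff_subset_sdiff_right h))

lemma isOpenIn_tint (he : TransRel e) (a : Set (E × E)) : IsOpenIn e (tint e a) := by
  refine ⟨Set.sdiff_subset, ?_⟩
  rw [tint, Set.sdiff_sdiff_cancel_left (tcl_subset_of_transRel he Set.sdiff_subset)]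
  exact transRel_tcl _

lemma isOpenIn_iUnion {ι : Sort*} (he : TransRel e) {u : ι → Set (E × E)}
    (hu : ∀ i, IsOpenIn e (u i)) : IsOpenIn e (⋃ i, u i) := by
  refine ⟨Set.iUnion_subset fun i => (hu i).1, fun x y z hxy hyz => ⟨he _ _ _ hxy.1 hyz.1, ?_⟩⟩
  simp only [Set.mem_sdiff, Set.mem_iUnion, not_exists] at hxy hyz ⊢
  exact fun i => ((hu i).2 x y z ⟨hxy.1, hxy.2 i⟩ ⟨hyz.1, hyz.2 i⟩).2

lemma IsOpenIn.subset_tint_tcl (hu : IsOpenIn e u) : u ⊆ tint e (tcl u) := by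
  refine fun p hp => ⟨hu.1 hp, fun h => ?_⟩
  exact (tcl_subset_of_transRel hu.2 (Set.sdiff_subset_sdiff_right (subset_tcl u)) h).2 hp

lemma IsOpenIn.regClosed_tcl (he : TransRel e) (hu : IsOpenIn e u) : RegClosed e (tcl u) := by
  refine ⟨tcl_subset_of_transRel he hu.1, (tcl_mono hu.subset_tint_tcl).antisymm ?_⟩
  exact (tcl_mono (tint_subset e _)).trans (tcl_tcl u).subset

lemma regClosed_iff_exists_isOpenIn (he : TransRel e) :
    RegClosed e a ↔ ∃ u, IsOpenIn e u ∧ a = tcl u :=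
  ⟨fun h => ⟨tint e a, isOpenIn_tint he a, h.2⟩, fun ⟨_, hu, h⟩ => h ▸ hu.regClosed_tcl he⟩

lemma regClosed_tcl_tint (he : TransRel e) (a : Set (E × E)) : RegClosed e (tcl (tint e a)) :=
  (isOpenIn_tint he a).regClosed_tcl he

lemma RegClosed.transRel (ha : RegClosed e a) : TransRel a :=
  ha.2 ▸ transRel_tcl _

lemma regClosed_tcl_iUnion {ι : Sort*} (he : TransRel e) {a : ι → Set (E × E)}
    (ha : ∀ i, RegClosed e (a i)) : RegClosed e (tcl (⋃ i, a i)) := by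
  have hunion : tcl (⋃ i, a i) = tcl (⋃ i, tint e (a i)) := by
    conv_lhs => rw [Set.iUnion_congr fun i => (ha i).2]
    exact tcl_iUnion_tcl _
  exact hunion ▸ (isOpenIn_iUnion he fun i => isOpenIn_tint he (a i)).regClosed_tcl he

lemma RegClosed.tcl_subset (hb : RegClosed e b) (h : a ⊆ b) : tcl a ⊆ b :=
  tcl_subset_of_transRel hb.transRel h

lemma RegClosed.tcl_tint_subset (hb : RegClosed e b) (h : a ⊆ b) : tcl (tint e a) ⊆ b :=
  hb.2 ▸ tcl_mono (tint_mono e h)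

lemma RegClosed.subset_tcl_tint (hb : RegClosed e b) (h : b ⊆ a) : b ⊆ tcl (tint e a) :=
  hb.2 ▸ tcl_mono (tint_mono e h)

end RegClosed

/-- (i) a subset of `e` is regular closed iff it is the transitive closure of an
open set; (ii) for any family of regular closed sets, `cl` of the union is the least regular
closed set containing all of them and `cl(int(⋂))` is the greatest regular closed set
contained in all of them; hence `Reg(e)` is a complete lattice. -/
theorem regClosed_complete_lattice {E : Type*} (e : Set (E × E)) (he : TransRel e) :
    (∀ x : Set (E × E), x ⊆ e → (RegClosed e x ↔ ∃ u, IsOpenIn e u ∧ x = tcl u)) ∧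
    (∀ {ι : Type*} (a : ι → Set (E × E)), (∀ i, RegClosed e (a i)) →
      (RegClosed e (tcl (⋃ i, a i)) ∧ (∀ i, a i ⊆ tcl (⋃ i, a i)) ∧
        (∀ b, RegClosed e b → (∀ i, a i ⊆ b) → tcl (⋃ i, a i) ⊆ b)) ∧
      (RegClosed e (tcl (tint e (⋂ i, a i))) ∧ (∀ i, tcl (tint e (⋂ i, a i)) ⊆ a i) ∧
        (∀ b, RegClosed e b → (∀ i, b ⊆ a i) → b ⊆ tcl (tint e (⋂ i, a i))))) := by
  refine ⟨fun x _ => regClosed_iff_exists_isOpenIn he, fun a ha => ⟨⟨?_, ?_, ?_⟩, ?_, ?_, ?_⟩⟩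
  · exact regClosed_tcl_iUnion he ha
  · exact fun i => (Set.subset_iUnion a i).trans (subset_tcl _)
  · exact fun b hb hab => hb.tcl_subset (Set.iUnion_subset hab)
  · exact regClosed_tcl_tint he _
  · exact fun i => (ha i).tcl_tint_subset (Set.iInter_subset a i)
  · exact fun b hb hab => hb.subset_tcl_tint (Set.subset_iInter hab)
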